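/- (Theorem 2 of the paper, finite-time tracking bound.) Let Y = ∏_{i=1}^d [l_i, u_i] ⊂ ℝ^d be a nonempty box and let (F^k)_{k≥0} be a sequence of differentiable functions ℝ^d → ℝ such that each F^k has a coordinate-wise quadratic upper bound with constant L > 0 on Y, satisfies the proximal Polyak–Łojasiewicz inequality on Y with constant σ ∈ (0, dL), attains a common optimal value F* := inf_{ξ∈Y} F^k(ξ) independent of k, and sup_{ξ ∈ Y} |F^k(ξ) − F^{k−1}(ξ)| ≤ e for all k ≥ 1 and some e ≥ 0. Fix ξ^0 ∈ Y and, for every finite coordinate sequence ω = (i^0,…,i^{k−1}) ∈ {1,…,d}^k, define ξ^{j+1}(ω) as the coordinate prox-step of F^j at ξ^j(ω) in coordinate i^j with step constant L (one iteration per time step). Then, with q := 1 − σ/(dL), for every k ≥ 0: d^{−k} Σ_{ω ∈ {1,…,d}^k} [ F^k(ξ^k(ω)) − F* ] ≤ q^k (F^0(ξ^0) − F*) + e · Σ_{j=0}^{k−1} q^j ≤ q^k (F^0(ξ^0) − F*) + e/(1 − q). -/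

import Mathlib

/-!
The model minimized in `Dfwd` is separable over coordinates, and a coordinate prox-step
minimizes exactly one of its one-dimensional parts. Summing the coordinate-wise quadratic upper
bound over all `d` coordinates therefore gives `∑ᵢ F(ξ^{+,i}) ≤ d F(ξ) − D(ξ, L)/(2L)`, and
prox-PL turns this into a contraction of the averaged optimality gap by `q = 1 − σ/(dL)`.
Passing from `F^k` to `F^{k+1}` costs at most `e`, so the averaged gaps satisfy
`E_{k+1} ≤ q E_k + e`; unrolling this recursion and bounding the geometric series by
`1/(1 − q)` gives the claim.
-/

/-- Membership in the box `Y = ∏_i [l_i, u_i] ⊂ ℝ^d`. -/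
def InBox {d : ℕ} (l u ξ : Fin d → ℝ) : Prop := ∀ i, ξ i ∈ Set.Icc (l i) (u i)

/-- The `i`-th partial derivative `∂_i F` of `F : ℝ^d → ℝ` at `ξ`. -/
noncomputable def pd {d : ℕ} (F : (Fin d → ℝ) → ℝ) (ξ : Fin d → ℝ) (i : Fin d) : ℝ :=
  deriv (fun t : ℝ => F (Function.update ξ i t)) (ξ i)

/-- `F` has a coordinate-wise quadratic upper bound with constant `L` on the box:
`F(ξ + α e_i) ≤ F(ξ) + α ∂_i F(ξ) + (L/2) α²` whenever `ξ` and `ξ + α e_i` lie in the box. -/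
def CoordQuadUB {d : ℕ} (F : (Fin d → ℝ) → ℝ) (L : ℝ) (l u : Fin d → ℝ) : Prop :=
  ∀ ξ, InBox l u ξ → ∀ i : Fin d, ∀ α : ℝ, InBox l u (Function.update ξ i (ξ i + α)) →
    F (Function.update ξ i (ξ i + α)) ≤ F ξ + α * pd F ξ i + L / 2 * α ^ 2

/-- `ξ'` is the coordinate prox-step of `F` at `ξ` in coordinate `i` with step constant `L`:
`ξ' = ξ + α e_i` where `α` minimizes `α ∂_i F(ξ) + (L/2) α²` subject to `ξ_i + α ∈ [l_i, u_i]`. -/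
def IsProxStep {d : ℕ} (F : (Fin d → ℝ) → ℝ) (L : ℝ) (l u ξ : Fin d → ℝ) (i : Fin d)
    (ξ' : Fin d → ℝ) : Prop :=
  ∃ α : ℝ, ξ' = Function.update ξ i (ξ i + α) ∧ ξ i + α ∈ Set.Icc (l i) (u i) ∧
    ∀ β : ℝ, ξ i + β ∈ Set.Icc (l i) (u i) →
      α * pd F ξ i + L / 2 * α ^ 2 ≤ β * pd F ξ i + L / 2 * β ^ 2

/-- The forward-step quantity
`D(ξ, α) = −2α · inf_{ξ' ∈ Y} [⟨∇F(ξ), ξ' − ξ⟩ + (α/2)‖ξ' − ξ‖²]`. -/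
noncomputable def Dfwd {d : ℕ} (F : (Fin d → ℝ) → ℝ) (l u ξ : Fin d → ℝ) (α : ℝ) : ℝ :=
  -2 * α * sInf {v : ℝ | ∃ ξ', InBox l u ξ' ∧
    v = (∑ i, pd F ξ i * (ξ' i - ξ i)) + α / 2 * ∑ i, (ξ' i - ξ i) ^ 2}

/-- The proximal Polyak–Łojasiewicz inequality on the box with constant `σ` and optimal
value `Fstar`: `(1/2) D(ξ, L) ≥ σ (F(ξ) − F*)` for all `ξ` in the box. -/
def ProxPL {d : ℕ} (F : (Fin d → ℝ) → ℝ) (L : ℝ) (l u : Fin d → ℝ) (σ Fstar : ℝ) : Prop :=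
  ∀ ξ, InBox l u ξ → (1 / 2) * Dfwd F l u ξ L ≥ σ * (F ξ - Fstar)


open Finset

section Box

variable {d : ℕ} {l u : Fin d → ℝ}

theorem InBox.update {ξ : Fin d → ℝ} (hξ : InBox l u ξ) {i : Fin d} {t : ℝ}
    (ht : t ∈ Set.Icc (l i) (u i)) : InBox l u (Function.update ξ i t) := by
  intro j
  rcases eq_or_ne j i with rfl | hji
  · simpa using ht
  · simpa [Function.update_of_ne hji] using hξ j

namespace IsProxStep

variable {F : (Fin d → ℝ) → ℝ} {L : ℝ} {ξ ξ' : Fin d → ℝ} {i : Fin d}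

theorem inBox (h : IsProxStep F L l u ξ i ξ') (hξ : InBox l u ξ) : InBox l u ξ' := by
  obtain ⟨α, rfl, hα, -⟩ := h
  exact hξ.update hα

theorem le_add_model (h : IsProxStep F L l u ξ i ξ') (hquad : CoordQuadUB F L l u)
    (hξ : InBox l u ξ) {β : ℝ} (hβ : ξ i + β ∈ Set.Icc (l i) (u i)) :
    F ξ' ≤ F ξ + (β * pd F ξ i + L / 2 * β ^ 2) := by
  obtain ⟨α, rfl, hα, hmin⟩ := h
  linarith [hquad ξ hξ i α (hξ.update hα), hmin β hβ]

end IsProxStep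

variable {F : (Fin d → ℝ) → ℝ} {L σ Fstar : ℝ} {ξ : Fin d → ℝ} {P : Fin d → Fin d → ℝ}

theorem sum_proxStep_le_sub_Dfwd (hL : 0 < L) (hquad : CoordQuadUB F L l u)
    (hξ : InBox l u ξ) (hP : ∀ i, IsProxStep F L l u ξ i (P i)) :
    ∑ i, F (P i) ≤ d * F ξ - Dfwd F l u ξ L / (2 * L) := by
  set S : Set ℝ := {v : ℝ | ∃ ξ', InBox l u ξ' ∧
    v = (∑ i, pd F ξ i * (ξ' i - ξ i)) + L / 2 * ∑ i, (ξ' i - ξ i) ^ 2}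
  have hD : Dfwd F l u ξ L / (2 * L) = -sInf S := by
    change -2 * L * sInf S / (2 * L) = _
    field_simp
  have hinf : ∑ i, F (P i) - d * F ξ ≤ sInf S := by
    refine le_csInf ⟨_, ξ, hξ, rfl⟩ ?_
    rintro v ⟨ξ', hξ', rfl⟩
    calc ∑ i, F (P i) - d * F ξ = ∑ i, (F (P i) - F ξ) := by simp [sum_sub_distrib]
      _ ≤ ∑ i, (pd F ξ i * (ξ' i - ξ i) + L / 2 * (ξ' i - ξ i) ^ 2) := by
          gcongr with i
          have := (hP i).le_add_model hquad hξ (β := ξ' i - ξ i) (by simpa using hξ' i)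
          linarith
      _ = _ := by rw [sum_add_distrib, mul_sum]
  linarith

theorem ProxPL.sum_proxStep_sub_le (hPL : ProxPL F L l u σ Fstar) (hL : 0 < L)
    (hquad : CoordQuadUB F L l u) (hξ : InBox l u ξ) (hP : ∀ i, IsProxStep F L l u ξ i (P i)) :
    ∑ i, (F (P i) - Fstar) ≤ (d - σ / L) * (F ξ - Fstar) := by
  have hdesc := sum_proxStep_le_sub_Dfwd hL hquad hξ hP
  have hPLξ : σ / L * (F ξ - Fstar) ≤ Dfwd F l u ξ L / (2 * L) := by
    rw [div_mul_eq_mul_div, div_le_div_iff₀ hL (by positivity)]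
    nlinarith [hPL ξ hξ]
  rw [sum_sub_distrib, sum_const, card_univ, Fintype.card_fin, nsmul_eq_mul]
  linarith

end Box

theorem sum_pi_fin_succ_eq_sum_snoc {M α : Type*} [AddCommMonoid M] [Fintype α] {k : ℕ}
    (f : (Fin (k + 1) → α) → M) :
    ∑ ω, f ω = ∑ ω : Fin k → α, ∑ a, f (Fin.snoc ω a) := by
  rw [← (Fin.snocEquiv fun _ => α).sum_comp, Fintype.sum_prod_type, sum_comm]
  rfl

theorem le_pow_mul_add_geom_sum {E : ℕ → ℝ} {q e : ℝ} (hq : 0 ≤ q)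
    (h : ∀ k, E (k + 1) ≤ q * E k + e) (k : ℕ) :
    E k ≤ q ^ k * E 0 + e * ∑ j ∈ range k, q ^ j := by
  induction k with
  | zero => simp
  | succ k ih =>
    calc E (k + 1) ≤ q * E k + e := h k
      _ ≤ q * (q ^ k * E 0 + e * ∑ j ∈ range k, q ^ j) + e := by gcongr
      _ = _ := by rw [geom_sum_succ]; ring

section Iteration

variable {d : ℕ} {l u : Fin d → ℝ} {F : ℕ → (Fin d → ℝ) → ℝ} {L : ℝ}
  {Ξ : (k : ℕ) → (Fin k → Fin d) → Fin d → ℝ}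

theorem inBox_of_isProxStep {ξ0 : Fin d → ℝ} (hξ0 : InBox l u ξ0) (hinit : ∀ ω, Ξ 0 ω = ξ0)
    (hstep : ∀ k : ℕ, ∀ ω : Fin (k + 1) → Fin d,
      IsProxStep (F k) L l u (Ξ k (fun j => ω j.castSucc)) (ω (Fin.last k)) (Ξ (k + 1) ω)) :
    ∀ k ω, InBox l u (Ξ k ω)
  | 0, ω => hinit ω ▸ hξ0
  | k + 1, ω => (hstep k ω).inBox (inBox_of_isProxStep hξ0 hinit hstep k _)

theorem average_succ_le {σ Fstar e : ℝ} {k : ℕ} (hd : 0 < d) (hL : 0 < L)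
    (hquad : CoordQuadUB (F k) L l u) (hPL : ProxPL (F k) L l u σ Fstar)
    (hvar : ∀ ξ, InBox l u ξ → F (k + 1) ξ - F k ξ ≤ e) (hbox : ∀ ω, InBox l u (Ξ k ω))
    (hstep : ∀ ω : Fin (k + 1) → Fin d,
      IsProxStep (F k) L l u (Ξ k (fun j => ω j.castSucc)) (ω (Fin.last k)) (Ξ (k + 1) ω)) :
    1 / (d : ℝ) ^ (k + 1) * ∑ ω, (F (k + 1) (Ξ (k + 1) ω) - Fstar) ≤
      (1 - σ / (d * L)) * (1 / (d : ℝ) ^ k * ∑ ω, (F k (Ξ k ω) - Fstar)) + e := by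
  have hsum : ∑ ω, (F (k + 1) (Ξ (k + 1) ω) - Fstar) ≤
      (d - σ / L) * ∑ ω, (F k (Ξ k ω) - Fstar) + (d : ℝ) ^ (k + 1) * e :=
    calc ∑ ω, (F (k + 1) (Ξ (k + 1) ω) - Fstar)
        ≤ ∑ ω, ((F k (Ξ (k + 1) ω) - Fstar) + e) := by
          gcongr with ω
          linarith [hvar _ ((hstep ω).inBox (hbox _))]
      _ = ∑ ω, ∑ i, (F k (Ξ (k + 1) (Fin.snoc ω i)) - Fstar) + (d : ℝ) ^ (k + 1) * e := by
          rw [sum_add_distrib, sum_pi_fin_succ_eq_sum_snoc]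
          simp [mul_comm]
      _ ≤ ∑ ω, (d - σ / L) * (F k (Ξ k ω) - Fstar) + (d : ℝ) ^ (k + 1) * e := by
          gcongr with ω
          exact hPL.sum_proxStep_sub_le hL hquad (hbox ω) fun i => by
            simpa using hstep (Fin.snoc ω i)
      _ = _ := by rw [mul_sum]
  have hd' : (0 : ℝ) < d := by exact_mod_cast hd
  calc 1 / (d : ℝ) ^ (k + 1) * ∑ ω, (F (k + 1) (Ξ (k + 1) ω) - Fstar)
      ≤ 1 / (d : ℝ) ^ (k + 1) *
          ((d - σ / L) * ∑ ω, (F k (Ξ k ω) - Fstar) + (d : ℝ) ^ (k + 1) * e) := by gcongr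
    _ = _ := by field_simp; ring

end Iteration

theorem stmt8_general {d : ℕ} (hd : 0 < d) (l u : Fin d → ℝ)
    (Fk : ℕ → (Fin d → ℝ) → ℝ)
    (L σ Fstar e : ℝ) (hL : 0 < L) (hσ : 0 < σ) (hσ' : σ < d * L) (he : 0 ≤ e)
    (hquad : ∀ k, CoordQuadUB (Fk k) L l u)
    (hPL : ∀ k, ProxPL (Fk k) L l u σ Fstar)
    (hvar : ∀ k : ℕ, 1 ≤ k → ∀ ξ, InBox l u ξ → |Fk k ξ - Fk (k - 1) ξ| ≤ e)
    (ξ0 : Fin d → ℝ) (hξ0 : InBox l u ξ0)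
    (Ξ : (k : ℕ) → (Fin k → Fin d) → (Fin d → ℝ))
    (hinit : ∀ ω : Fin 0 → Fin d, Ξ 0 ω = ξ0)
    (hstep : ∀ k : ℕ, ∀ ω : Fin (k + 1) → Fin d,
      IsProxStep (Fk k) L l u (Ξ k (fun j => ω j.castSucc)) (ω (Fin.last k)) (Ξ (k + 1) ω))
    (q : ℝ) (hq : q = 1 - σ / (d * L)) :
    ∀ k : ℕ,
      (1 / (d : ℝ) ^ k) * ∑ ω : Fin k → Fin d, (Fk k (Ξ k ω) - Fstar) ≤
          q ^ k * (Fk 0 ξ0 - Fstar) + e * ∑ j ∈ Finset.range k, q ^ j ∧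
      q ^ k * (Fk 0 ξ0 - Fstar) + e * ∑ j ∈ Finset.range k, q ^ j ≤
          q ^ k * (Fk 0 ξ0 - Fstar) + e / (1 - q) := by
  intro k
  have hdL : (0 : ℝ) < d * L := mul_pos (by exact_mod_cast hd) hL
  have hq0 : 0 ≤ q := by rw [hq, sub_nonneg, div_le_one hdL]; exact hσ'.le
  have hq1 : q < 1 := by rw [hq]; linarith [div_pos hσ hdL]
  have hbox := inBox_of_isProxStep hξ0 hinit hstep
  refine ⟨?_, ?_⟩
  · have hrec := le_pow_mul_add_geom_sum hq0 (E := fun k => 1 / (d : ℝ) ^ k *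
      ∑ ω : Fin k → Fin d, (Fk k (Ξ k ω) - Fstar)) (fun k => hq ▸ average_succ_le hd hL
        (hquad k) (hPL k) (fun ξ hξ => (abs_le.mp (hvar (k + 1) k.succ_pos ξ hξ)).2)
        (hbox k) (hstep k)) k
    simpa [hinit] using hrec
  · gcongr
    calc e * ∑ j ∈ range k, q ^ j ≤ e * (q ^ 0 / (1 - q)) := by
          rw [range_eq_Ico]; gcongr; exact geom_sum_Ico_le_of_lt_one hq0 hq1
      _ = e / (1 - q) := by simp [div_eq_mul_inv]

/-- Theorem 2 of the paper, finite-time tracking bound: for a sequence of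
objectives `F^k` with common constants `L`, `σ ∈ (0, dL)`, common attained optimal value
`F*`, and successive variation bounded by `e`, one randomized coordinate prox-step per
time step yields, with `q := 1 − σ/(dL)`,
`d^{−k} Σ_ω [F^k(ξ^k(ω)) − F*] ≤ q^k (F⁰(ξ⁰) − F*) + e Σ_{j<k} q^j ≤ q^k (F⁰(ξ⁰) − F*) + e/(1 − q)`. -/
theorem stmt8 {d : ℕ} (hd : 0 < d) (l u : Fin d → ℝ) (hlu : ∀ i, l i ≤ u i)
    (Fk : ℕ → (Fin d → ℝ) → ℝ) (hdiff : ∀ k, Differentiable ℝ (Fk k))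
    (L σ Fstar e : ℝ) (hL : 0 < L) (hσ : 0 < σ) (hσ' : σ < d * L) (he : 0 ≤ e)
    (hquad : ∀ k, CoordQuadUB (Fk k) L l u)
    (hstar : ∀ k, Fstar = sInf {v : ℝ | ∃ ξ, InBox l u ξ ∧ v = Fk k ξ})
    (hatt : ∀ k, ∃ ξs, InBox l u ξs ∧ Fk k ξs = Fstar)
    (hPL : ∀ k, ProxPL (Fk k) L l u σ Fstar)
    (hvar : ∀ k : ℕ, 1 ≤ k → ∀ ξ, InBox l u ξ → |Fk k ξ - Fk (k - 1) ξ| ≤ e)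
    (ξ0 : Fin d → ℝ) (hξ0 : InBox l u ξ0)
    (Ξ : (k : ℕ) → (Fin k → Fin d) → (Fin d → ℝ))
    (hinit : ∀ ω : Fin 0 → Fin d, Ξ 0 ω = ξ0)
    (hstep : ∀ k : ℕ, ∀ ω : Fin (k + 1) → Fin d,
      IsProxStep (Fk k) L l u (Ξ k (fun j => ω j.castSucc)) (ω (Fin.last k)) (Ξ (k + 1) ω))
    (q : ℝ) (hq : q = 1 - σ / (d * L)) :
    ∀ k : ℕ,
      (1 / (d : ℝ) ^ k) * ∑ ω : Fin k → Fin d, (Fk k (Ξ k ω) - Fstar) ≤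
          q ^ k * (Fk 0 ξ0 - Fstar) + e * ∑ j ∈ Finset.range k, q ^ j ∧
      q ^ k * (Fk 0 ξ0 - Fstar) + e * ∑ j ∈ Finset.range k, q ^ j ≤
          q ^ k * (Fk 0 ξ0 - Fstar) + e / (1 - q) :=
  stmt8_general hd l u Fk L σ Fstar e hL hσ hσ' he hquad hPL hvar ξ0 hξ0 Ξ hinit hstep q hq
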